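/- Define m_n as the minimum of Σᵢ λᵢ² over partitions λ of n with nonnegative rank. Then for all n ≥ 4, m_n ≥ n^{4/3}/4. -/

import Mathlib

/-! Let `λ` have `ℓ` parts, largest part `λ₁ ≥ ℓ`, and `s = ∑ λᵢ²`. Cauchy–Schwarz gives
`n² ≤ ℓ s`, while `ℓ² ≤ λ₁² ≤ s`; hence `n⁴ ≤ ℓ² s² ≤ s³`, i.e. `s ≥ n^{4/3}`. The infimum is
attained because the one-part partition has nonnegative rank. -/

/-- The minimal sum of squares of parts over partitions of n with nonnegative rank. -/
noncomputable def minSumSq (n : ℕ) : ℕ :=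
  sInf {s | ∃ P : n.Partition, P.parts.card ≤ P.parts.sup ∧
    (P.parts.map (fun x => x ^ 2)).sum = s}

namespace Multiset

theorem sq_sum_le_card_mul_sum_sq {α : Type*} [Semiring α] [LinearOrder α]
    [IsStrictOrderedRing α] [ExistsAddOfLE α] (m : Multiset α) :
    m.sum ^ 2 ≤ card m * (m.map (· ^ 2)).sum := by
  classical
  have h := _root_.sq_sum_le_card_mul_sum_sq (s := m.toEnumFinset) (f := Prod.fst)
  rwa [card_toEnumFinset, Finset.sum_eq_multiset_sum, Finset.sum_eq_multiset_sum,
    map_toEnumFinset_fst, ← Function.comp_def (· ^ 2) Prod.fst, ← map_map,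
    map_toEnumFinset_fst] at h

theorem sup_sq_le_sum_sq (m : Multiset ℕ) : m.sup ^ 2 ≤ (m.map (· ^ 2)).sum :=
  Nat.le_sqrt'.1 <| sup_le.2 fun _ hb =>
    Nat.le_sqrt'.2 (le_sum_of_mem (mem_map_of_mem (· ^ 2) hb))

end Multiset

theorem Nat.Partition.pow_four_le_sum_sq_pow_three {n : ℕ} (P : n.Partition)
    (hrank : P.parts.card ≤ P.parts.sup) : n ^ 4 ≤ (P.parts.map (· ^ 2)).sum ^ 3 := by
  set s := (P.parts.map (· ^ 2)).sum
  have hcs : n ^ 2 ≤ P.parts.card * s := by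
    have h := P.parts.sq_sum_le_card_mul_sum_sq
    rwa [P.parts_sum, Nat.cast_id] at h
  have hcard : P.parts.card ^ 2 ≤ s :=
    (Nat.pow_le_pow_left hrank 2).trans P.parts.sup_sq_le_sum_sq
  calc n ^ 4 = (n ^ 2) ^ 2 := by ring
    _ ≤ (P.parts.card * s) ^ 2 := Nat.pow_le_pow_left hcs 2
    _ = P.parts.card ^ 2 * s ^ 2 := by ring
    _ ≤ s * s ^ 2 := Nat.mul_le_mul_right _ hcard
    _ = s ^ 3 := by ring

theorem Real.rpow_div_le_of_pow_le_pow {x y : ℝ} {p q : ℕ} (hx : 0 ≤ x) (hy : 0 ≤ y)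
    (hq : q ≠ 0) (h : x ^ p ≤ y ^ q) : x ^ ((p : ℝ) / q) ≤ y := by
  refine le_of_pow_le_pow_left₀ hq hy ?_
  rwa [← Real.rpow_natCast (x ^ _), ← Real.rpow_mul hx,
    div_mul_cancel₀ _ (Nat.cast_ne_zero.2 hq), Real.rpow_natCast]

theorem exists_partition_sum_sq_eq_minSumSq (n : ℕ) :
    ∃ P : n.Partition, P.parts.card ≤ P.parts.sup ∧
      (P.parts.map (· ^ 2)).sum = minSumSq n := by
  refine Nat.sInf_mem (s := {s | ∃ P : n.Partition, P.parts.card ≤ P.parts.sup ∧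
    (P.parts.map (· ^ 2)).sum = s}) ⟨_, Nat.Partition.indiscrete n, ?_, rfl⟩
  rcases eq_or_ne n 0 with rfl | hn
  · simp
  · simpa [Nat.Partition.indiscrete_parts hn] using Nat.one_le_iff_ne_zero.2 hn

theorem stmt_13_general (n : ℕ) :
    (n : ℝ) ^ ((4 : ℝ) / 3) / 4 ≤ (minSumSq n : ℝ) := by
  obtain ⟨P, hrank, hsum⟩ := exists_partition_sum_sq_eq_minSumSq n
  have hkey : (n : ℝ) ^ 4 ≤ (minSumSq n : ℝ) ^ 3 := by
    exact_mod_cast hsum ▸ P.pow_four_le_sum_sq_pow_three hrank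
  calc (n : ℝ) ^ ((4 : ℝ) / 3) / 4 ≤ (n : ℝ) ^ ((4 : ℕ) / (3 : ℕ) : ℝ) := by
        rw [Nat.cast_ofNat, Nat.cast_ofNat]
        exact div_le_self (by positivity) (by norm_num)
    _ ≤ minSumSq n := Real.rpow_div_le_of_pow_le_pow (by positivity) (by positivity)
        three_ne_zero hkey

/-- For `n ≥ 4`, `minSumSq n ≥ n^(4/3) / 4`. -/
theorem stmt_13 (n : ℕ) (hn : 4 ≤ n) :
    (n : ℝ) ^ ((4 : ℝ) / 3) / 4 ≤ (minSumSq n : ℝ) :=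
  stmt_13_general n
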